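/- arXiv:1706.10066 — 2 statements merged into one kernel-verified Lean document; each statement's English description precedes it below -/
import Mathlib

section
/- Let S : Ω → Matrix(p,p,ℝ) be a random matrix taking values in symmetric matrices with square-integrable entries and entrywise mean E[S] = Σ, where Σ is a p×p real symmetric matrix. Set η = tr(Σ)/p, η₂ = tr(Σ²)/p and a₁ = E[‖S − Σ‖²_F]. Then for all real α, β: E[‖α·I + β·S − Σ‖²_F] = α²·p + β²·a₁ + (1−β)²·η₂·p − 2·α·(1−β)·η·p. -/
/-!
Write `α • 1 + β • S - M = β • (S - M) + C` with the deterministic bias `C = α • 1 - (1 - β) • M`.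
Since `S - M` is centred and `X ↦ tr (Cᵀ * X)` is linear, the cross term
`2 tr (Cᵀ * (β • (S - M)))` has mean zero, so the expected squared Frobenius error is
`β² a₁ + tr (Cᵀ C)`; for symmetric `M`, `tr (Cᵀ C) = α² p - 2 α (1 - β) tr M + (1 - β)² tr (M²)`.
-/

open Matrix MeasureTheory

namespace Matrix

variable {n : Type*} [Fintype n]

theorem trace_transpose_mul_self_eq_sum_sq (A : Matrix n n ℝ) :
    (Aᵀ * A).trace = ∑ i, ∑ j, A i j ^ 2 := by
  simp only [trace, diag, mul_apply, transpose_apply, sq]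
  exact Finset.sum_comm

theorem trace_transpose_mul_self_add (A B : Matrix n n ℝ) :
    ((A + B)ᵀ * (A + B)).trace
      = (Aᵀ * A).trace + 2 * (Bᵀ * A).trace + (Bᵀ * B).trace := by
  have hcross : (Aᵀ * B).trace = (Bᵀ * A).trace := by
    rw [← trace_transpose, transpose_mul, transpose_transpose]
  simp only [transpose_add, add_mul, mul_add, trace_add, hcross]
  ring

theorem trace_transpose_mul_self_smul (c : ℝ) (A : Matrix n n ℝ) :
    ((c • A)ᵀ * (c • A)).trace = c ^ 2 * (Aᵀ * A).trace := by
  simp only [transpose_smul, Matrix.smul_mul, Matrix.mul_smul, trace_smul, smul_eq_mul]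
  ring

theorem trace_transpose_mul_self_smul_one_sub_smul [DecidableEq n] {M : Matrix n n ℝ}
    (hM : M.IsSymm) (a c : ℝ) :
    ((a • 1 - c • M)ᵀ * (a • 1 - c • M)).trace
      = a ^ 2 * Fintype.card n - 2 * a * c * M.trace + c ^ 2 * (M * M).trace := by
  simp only [transpose_sub, transpose_smul, transpose_one, hM.eq, mul_sub, sub_mul, mul_one,
    one_mul, Algebra.mul_smul_comm, Algebra.smul_mul_assoc, trace_sub, trace_smul, trace_one,
    smul_eq_mul]
  ring

theorem trace_div_mul_cancel {p : ℕ} (A : Matrix (Fin p) (Fin p) ℝ) :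
    A.trace / p * p = A.trace := by
  rcases Nat.eq_zero_or_pos p with rfl | hp
  · simp [trace]
  · field_simp

end Matrix

section RandomMatrix

variable {Ω n : Type*} [MeasurableSpace Ω] {μ : Measure Ω} [Fintype n] {X : Ω → Matrix n n ℝ}

theorem integrable_trace_transpose_mul_self (hX : ∀ i j, MemLp (fun ω => X ω i j) 2 μ) :
    Integrable (fun ω => ((X ω)ᵀ * X ω).trace) μ := by
  simp_rw [trace_transpose_mul_self_eq_sum_sq]
  exact integrable_finsetSum _ fun i _ => integrable_finsetSum _ fun j _ =>
    (hX i j).integrable_sq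

theorem integrable_trace_mul (C : Matrix n n ℝ)
    (hX : ∀ i j, Integrable (fun ω => X ω i j) μ) :
    Integrable (fun ω => (C * X ω).trace) μ := by
  simp only [trace, diag, mul_apply]
  exact integrable_finsetSum _ fun i _ => integrable_finsetSum _ fun j _ =>
    (hX j i).const_mul _

theorem integral_trace_mul (C : Matrix n n ℝ) (hX : ∀ i j, Integrable (fun ω => X ω i j) μ) :
    ∫ ω, (C * X ω).trace ∂μ = (C * Matrix.of fun i j => ∫ ω, X ω i j ∂μ).trace := by
  simp only [trace, diag, mul_apply, of_apply]
  refine (integral_finsetSum _ fun i _ => integrable_finsetSum _ fun j _ =>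
    (hX j i).const_mul _).trans (Finset.sum_congr rfl fun i _ => ?_)
  refine (integral_finsetSum _ fun j _ => (hX j i).const_mul _).trans ?_
  simp only [integral_const_mul]

theorem integral_trace_transpose_mul_self_add_of_integral_eq_zero [IsProbabilityMeasure μ]
    (C : Matrix n n ℝ) (hX : ∀ i j, MemLp (fun ω => X ω i j) 2 μ)
    (hmean : ∀ i j, ∫ ω, X ω i j ∂μ = 0) :
    ∫ ω, ((X ω + C)ᵀ * (X ω + C)).trace ∂μ
      = ∫ ω, ((X ω)ᵀ * X ω).trace ∂μ + (Cᵀ * C).trace := by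
  have hX_int : ∀ i j, Integrable (fun ω => X ω i j) μ := fun i j =>
    (hX i j).integrable one_le_two
  have hsq := integrable_trace_transpose_mul_self hX
  have hcross := (integrable_trace_mul Cᵀ hX_int).const_mul 2
  have hmean_matrix : (Matrix.of fun i j => ∫ ω, X ω i j ∂μ) = 0 := by
    ext i j
    exact hmean i j
  simp_rw [trace_transpose_mul_self_add]
  rw [integral_add (by exact hsq.add hcross) (integrable_const _), integral_add hsq hcross,
    integral_const_mul, integral_trace_mul _ hX_int, hmean_matrix]
  simp

end RandomMatrix

theorem mse_regularized_scm_expansion_general (p : ℕ) {Ω : Type*}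
    [MeasurableSpace Ω] (μ : Measure Ω) [IsProbabilityMeasure μ]
    (M : Matrix (Fin p) (Fin p) ℝ) (hM : M.IsSymm)
    (S : Ω → Matrix (Fin p) (Fin p) ℝ)
    (hL2 : ∀ i j, MemLp (fun ω => S ω i j) 2 μ)
    (hmean : ∀ i j, (∫ ω, S ω i j ∂μ) = M i j) (α β : ℝ) :
    (∫ ω, ((α • (1 : Matrix (Fin p) (Fin p) ℝ) + β • S ω - M)ᵀ *
        (α • (1 : Matrix (Fin p) (Fin p) ℝ) + β • S ω - M)).trace ∂μ)
      = α ^ 2 * p + β ^ 2 * (∫ ω, ((S ω - M)ᵀ * (S ω - M)).trace ∂μ)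
        + (1 - β) ^ 2 * ((M * M).trace / p) * p
        - 2 * α * (1 - β) * (M.trace / p) * p := by
  have hsplit : ∀ ω, α • 1 + β • S ω - M = β • (S ω - M) + (α • 1 - (1 - β) • M) :=
    fun ω => by module
  have hcentred_L2 : ∀ i j, MemLp (fun ω => (β • (S ω - M)) i j) 2 μ := fun i j =>
    ((hL2 i j).sub (memLp_const (M i j))).const_smul β
  have hcentred_mean : ∀ i j, ∫ ω, (β • (S ω - M)) i j ∂μ = 0 := fun i j => by
    simp [integral_const_mul, integral_sub ((hL2 i j).integrable one_le_two) (integrable_const _),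
      hmean]
  simp_rw [hsplit]
  rw [integral_trace_transpose_mul_self_add_of_integral_eq_zero _ hcentred_L2 hcentred_mean,
    trace_transpose_mul_self_smul_one_sub_smul hM]
  simp only [trace_transpose_mul_self_smul, integral_const_mul, Fintype.card_fin]
  linear_combination 2 * α * (1 - β) * trace_div_mul_cancel M
    - (1 - β) ^ 2 * trace_div_mul_cancel (M * M)

/-- For a random symmetric `p × p` matrix `S` with square-integrable entries and
entrywise mean `E[S] = M` (symmetric), setting `η = tr(M)/p`, `η₂ = tr(M²)/p`
and `a₁ = E[‖S − M‖²_F]`, for all real `α, β`: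
`E[‖α·I + β·S − M‖²_F] = α²·p + β²·a₁ + (1−β)²·η₂·p − 2·α·(1−β)·η·p`. -/
theorem mse_regularized_scm_expansion (p : ℕ) (hp : 1 ≤ p) {Ω : Type*}
    [MeasurableSpace Ω] (μ : Measure Ω) [IsProbabilityMeasure μ]
    (M : Matrix (Fin p) (Fin p) ℝ) (hM : M.IsSymm)
    (S : Ω → Matrix (Fin p) (Fin p) ℝ) (hS : ∀ ω, (S ω).IsSymm)
    (hL2 : ∀ i j, MemLp (fun ω => S ω i j) 2 μ)
    (hmean : ∀ i j, (∫ ω, S ω i j ∂μ) = M i j) (α β : ℝ) :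
    (∫ ω, ((α • (1 : Matrix (Fin p) (Fin p) ℝ) + β • S ω - M)ᵀ *
        (α • (1 : Matrix (Fin p) (Fin p) ℝ) + β • S ω - M)).trace ∂μ)
      = α ^ 2 * p + β ^ 2 * (∫ ω, ((S ω - M)ᵀ * (S ω - M)).trace ∂μ)
        + (1 - β) ^ 2 * ((M * M).trace / p) * p
        - 2 * α * (1 - β) * (M.trace / p) * p :=
  mse_regularized_scm_expansion_general p μ M hM S hL2 hmean α β
end

section
/- Let p ≥ 1, let η, η₂ be real numbers with a₂ := p·(η₂ − η²) ≥ 0, let a₁ > 0, and define L(α,β) = α²·p + β²·a₁ + (1−β)²·η₂·p − 2·α·(1−β)·η·p for (α,β) ∈ ℝ². Then L attains its global minimum over ℝ² uniquely at β₀ = a₂/(a₁ + a₂) and α₀ = (1 − β₀)·η, the minimum value is L(α₀,β₀) = (1 − β₀)·a₂, and β₀ ∈ [0,1). -/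
/-- Minimization of the quadratic MSE function
`L(α,β) = α²·p + β²·a₁ + (1−β)²·η₂·p − 2·α·(1−β)·η·p`:
if `p ≥ 1`, `a₂ := p·(η₂ − η²) ≥ 0` and `a₁ > 0`, then `L` attains its global
minimum over `ℝ²` uniquely at `β₀ = a₂/(a₁ + a₂)`, `α₀ = (1 − β₀)·η`, with
minimum value `(1 − β₀)·a₂`, and `β₀ ∈ [0,1)`. -/
theorem quadratic_mse_min (p : ℕ) (hp : 1 ≤ p) (η η₂ a₁ : ℝ)
    (ha₂ : 0 ≤ (p : ℝ) * (η₂ - η ^ 2)) (ha₁ : 0 < a₁) :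
    let a₂ : ℝ := (p : ℝ) * (η₂ - η ^ 2)
    let β₀ : ℝ := a₂ / (a₁ + a₂)
    let α₀ : ℝ := (1 - β₀) * η
    let L : ℝ → ℝ → ℝ := fun α β =>
      α ^ 2 * p + β ^ 2 * a₁ + (1 - β) ^ 2 * η₂ * p - 2 * α * (1 - β) * η * p
    (∀ α β : ℝ, L α₀ β₀ ≤ L α β) ∧
    (∀ α β : ℝ, (α, β) ≠ (α₀, β₀) → L α₀ β₀ < L α β) ∧
    L α₀ β₀ = (1 - β₀) * a₂ ∧ β₀ ∈ Set.Ico (0 : ℝ) 1 := by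
  intro a₂ β₀ α₀ L
  have hs : (0:ℝ) < a₁ + a₂ := by positivity
  have hs' : a₁ + a₂ ≠ 0 := ne_of_gt hs
  have hp' : (0:ℝ) < p := by exact_mod_cast Nat.lt_of_lt_of_le Nat.zero_lt_one hp
  have key : ∀ α β : ℝ, L α β =
      (p : ℝ) * (α - (1 - β) * η) ^ 2 + (a₁ + a₂) * (β - β₀) ^ 2 + (1 - β₀) * a₂ := by
    intro α β
    show α ^ 2 * p + β ^ 2 * a₁ + (1 - β) ^ 2 * η₂ * p - 2 * α * (1 - β) * η * p = _
    have : β₀ = a₂ / (a₁ + a₂) := rfl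
    rw [this]
    have ha2 : a₂ = (p : ℝ) * (η₂ - η ^ 2) := rfl
    field_simp
    ring
  have hL0 : L α₀ β₀ = (1 - β₀) * a₂ := by
    rw [key]
    have : α₀ - (1 - β₀) * η = 0 := by simp [α₀]
    rw [this]
    ring
  refine ⟨?_, ?_, hL0, ?_⟩
  · intro α β
    rw [hL0, key]
    nlinarith [sq_nonneg (α - (1 - β) * η), sq_nonneg (β - β₀)]
  · intro α β hne
    rw [hL0, key]
    have h : α ≠ α₀ ∨ β ≠ β₀ := by
      by_contra h
      push_neg at h
      exact hne (by simp [h.1, h.2])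
    rcases h with h | h
    · rcases eq_or_ne β β₀ with hb | hb
      · have h1 : α - (1 - β) * η ≠ 0 := by
          rw [hb]; simpa [α₀, sub_ne_zero] using h
        have h2 : (0:ℝ) < (α - (1 - β) * η) ^ 2 := by positivity
        nlinarith [sq_nonneg (β - β₀)]
      · have h1 : β - β₀ ≠ 0 := sub_ne_zero.mpr hb
        have h2 : (0:ℝ) < (β - β₀) ^ 2 := by positivity
        nlinarith [sq_nonneg (α - (1 - β) * η)]
    · have h1 : β - β₀ ≠ 0 := sub_ne_zero.mpr h
      have h2 : (0:ℝ) < (β - β₀) ^ 2 := by positivity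
      nlinarith [sq_nonneg (α - (1 - β) * η)]
  · constructor
    · exact div_nonneg ha₂ (le_of_lt hs)
    · rw [div_lt_one hs]
      linarith
end
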